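/- Let A be a finite-dimensional left-symmetric color algebra over k with respect to ε, and let P be a Nijenhuis operator on A with ε(|P|,|P|) = 1. Then for all i, j ∈ ℕ and all homogeneous x, y ∈ A: P^i(x)P^j(y) = ε(i·|P| + |x|, j·|P|) P^j(P^i(x)y) + P^i(x P^j(y)) − ε(|x|, j·|P|) P^{i+j}(xy), where i·|P| denotes the i-fold sum |P| + ⋯ + |P| in G. -/
import Mathlib


open scoped TensorProduct

/-- A skew-symmetric bicharacter of an abelian group `G` over a field `k`. -/
structure Bicharacter (G : Type*) (k : Type*) [AddCommGroup G] [Field k] where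
  ε : G → G → k
  ne_zero : ∀ a b : G, ε a b ≠ 0
  add_left : ∀ a b c : G, ε (a + b) c = ε a c * ε b c
  add_right : ∀ a b c : G, ε a (b + c) = ε a b * ε a c
  skew : ∀ a b : G, ε a b * ε b a = 1

/-- `(A, 𝒜, μ)` is a left-symmetric color algebra over `k` with respect to the
skew-symmetric bicharacter `ε`: the grading `𝒜` is an internal direct sum
decomposition of `A`, the multiplication `μ` respects the grading, and the
left-symmetric color identity holds on homogeneous elements. -/
structure IsLSCA {G k A : Type*} [AddCommGroup G] [DecidableEq G] [Field k]
    [AddCommGroup A] [Module k A]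
    (ε : Bicharacter G k) (𝒜 : G → Submodule k A) (μ : A →ₗ[k] A →ₗ[k] A) : Prop where
  internal : DirectSum.IsInternal 𝒜
  graded_mul : ∀ a b : G, ∀ x ∈ 𝒜 a, ∀ y ∈ 𝒜 b, μ x y ∈ 𝒜 (a + b)
  left_symm : ∀ a b c : G, ∀ x ∈ 𝒜 a, ∀ y ∈ 𝒜 b, ∀ z ∈ 𝒜 c,
    μ (μ x y) z - μ x (μ y z) = ε.ε a b • (μ (μ y x) z - μ y (μ x z))

/-- `P` is a Nijenhuis operator on the left-symmetric color algebra `A`, homogeneous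
of degree `c`:  `P(x)P(y) = ε(|P|+|x|,|P|) P(P(x)y) + P(x P(y)) − ε(|x|,|P|) P(P(xy))`
for all homogeneous `x, y`. -/
def IsNijenhuisOp {G k A : Type*} [AddCommGroup G] [Field k] [AddCommGroup A] [Module k A]
    (ε : Bicharacter G k) (𝒜 : G → Submodule k A) (μ : A →ₗ[k] A →ₗ[k] A)
    (c : G) (P : A →ₗ[k] A) : Prop :=
  (∀ a : G, ∀ x ∈ 𝒜 a, P x ∈ 𝒜 (a + c)) ∧
  ∀ a b : G, ∀ x ∈ 𝒜 a, ∀ y ∈ 𝒜 b,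
    μ (P x) (P y)
      = ε.ε (c + a) c • P (μ (P x) y) + P (μ x (P y)) - ε.ε a c • P (P (μ x y))

/-- `P` is a Rota-Baxter operator of weight `lam` on the left-symmetric color algebra
`A`, homogeneous of degree `c`:
`P(x)P(y) = ε(|P|+|x|,|P|) P(P(x)y) + P(x P(y)) + lam·P(xy)` for all homogeneous
`x, y`. -/
def IsRotaBaxterOp {G k A : Type*} [AddCommGroup G] [Field k] [AddCommGroup A] [Module k A]
    (ε : Bicharacter G k) (𝒜 : G → Submodule k A) (μ : A →ₗ[k] A →ₗ[k] A)
    (c : G) (lam : k) (P : A →ₗ[k] A) : Prop :=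
  (∀ a : G, ∀ x ∈ 𝒜 a, P x ∈ 𝒜 (a + c)) ∧
  ∀ a b : G, ∀ x ∈ 𝒜 a, ∀ y ∈ 𝒜 b,
    μ (P x) (P y)
      = ε.ε (c + a) c • P (μ (P x) y) + P (μ x (P y)) + lam • P (μ x y)

/-- If `P` is a Nijenhuis operator of degree `|P| = c` on the
finite-dimensional left-symmetric color algebra `A` with `ε(|P|,|P|) = 1`, then for all
`i, j ∈ ℕ` and all homogeneous `x, y ∈ A`:
`P^i(x)P^j(y) = ε(i|P|+|x|, j|P|) P^j(P^i(x)y) + P^i(x P^j(y)) − ε(|x|, j|P|) P^{i+j}(xy)`. -/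
theorem nijenhuis_pow {G k A : Type*} [AddCommGroup G] [DecidableEq G] [Field k]
    [AddCommGroup A] [Module k A] [FiniteDimensional k A]
    (ε : Bicharacter G k) (𝒜 : G → Submodule k A) (μ : A →ₗ[k] A →ₗ[k] A)
    (hA : IsLSCA ε 𝒜 μ)
    (c : G) (P : Module.End k A) (hP : IsNijenhuisOp ε 𝒜 μ c P)
    (hcc : ε.ε c c = 1) :
    ∀ i j : ℕ, ∀ a b : G, ∀ x ∈ 𝒜 a, ∀ y ∈ 𝒜 b,
      μ ((P ^ i) x) ((P ^ j) y)
        = ε.ε (i • c + a) (j • c) • (P ^ j) (μ ((P ^ i) x) y)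
          + (P ^ i) (μ x ((P ^ j) y))
          - ε.ε a (j • c) • (P ^ (i + j)) (μ x y) := by
  obtain ⟨hPmem, hPid⟩ := hP
  have h0r : ∀ a : G, ε.ε a 0 = 1 := by
    intro a
    have h := ε.add_right a 0 0
    rw [add_zero] at h
    exact mul_left_cancel₀ (ε.ne_zero a 0) (by rw [mul_one]; exact h.symm)
  have h0l : ∀ b : G, ε.ε 0 b = 1 := by
    intro b
    have h := ε.add_left 0 0 b
    rw [add_zero] at h
    exact mul_left_cancel₀ (ε.ne_zero 0 b) (by rw [mul_one]; exact h.symm)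
  have hεpow : ∀ i : ℕ, ε.ε (i • c) c = 1 := by
    intro i; induction i with
    | zero => rw [zero_nsmul]; exact h0l c
    | succ i ih => rw [succ_nsmul, ε.add_left, ih, hcc, one_mul]
  have hshift : ∀ (i : ℕ) (a : G), ε.ε (i • c + a) c = ε.ε a c := by
    intro i a; rw [ε.add_left, hεpow, one_mul]
  have hmem : ∀ (i : ℕ) (a : G) (x : A), x ∈ 𝒜 a → (P ^ i) x ∈ 𝒜 (a + i • c) := by
    intro i
    induction i with
    | zero => intro a x hx; simpa using hx
    | succ i ih =>
      intro a x hx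
      have h2 : a + (i + 1) • c = (a + i • c) + c := by rw [succ_nsmul, ← add_assoc]
      rw [h2, pow_succ', Module.End.mul_apply]
      exact hPmem _ _ (ih a x hx)
  have H1 : ∀ (i : ℕ) (a b : G) (x : A), x ∈ 𝒜 a → ∀ y ∈ 𝒜 b,
      μ ((P ^ i) x) (P y)
        = ε.ε (i • c + a) c • P (μ ((P ^ i) x) y) + (P ^ i) (μ x (P y))
          - ε.ε a c • (P ^ (i + 1)) (μ x y) := by
    intro i
    induction i with
    | zero =>
      intro a b x hx y hy
      simp only [pow_zero, Module.End.one_apply, zero_nsmul, zero_add, pow_one]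
      abel
    | succ i ih =>
      intro a b x hx y hy
      have hx' := hmem i a x hx
      have base := hPid (a + i • c) b ((P ^ i) x) hx' y hy
      have Pih := congrArg P (ih a b x hx y hy)
      simp only [map_add, map_sub, map_smul, pow_succ', Module.End.mul_apply] at Pih ⊢
      have e1 : c + (a + i • c) = (i + 1) • c + a := by rw [succ_nsmul]; abel
      have e2 : a + i • c = i • c + a := by abel
      rw [e1, e2] at base
      rw [base, Pih]
      abel
  have Hmain : ∀ (j i : ℕ) (a b : G) (x : A), x ∈ 𝒜 a → ∀ y ∈ 𝒜 b,
      μ ((P ^ i) x) ((P ^ j) y)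
        = ε.ε (i • c + a) (j • c) • (P ^ j) (μ ((P ^ i) x) y)
          + (P ^ i) (μ x ((P ^ j) y))
          - ε.ε a (j • c) • (P ^ (i + j)) (μ x y) := by
    intro j
    induction j with
    | zero =>
      intro i a b x hx y hy
      simp only [pow_zero, Module.End.one_apply, zero_nsmul, h0r, one_smul, Nat.add_zero]
      abel
    | succ j ih =>
      intro i a b x hx y hy
      have hy' := hmem j b y hy
      have h1 := H1 i a (b + j • c) x hx ((P ^ j) y) hy'
      have Pih := congrArg P (ih i a b x hx y hy)
      simp only [map_add, map_sub, map_smul] at Pih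
      rw [Pih, hshift i a] at h1
      simp only [pow_succ', Module.End.mul_apply] at h1
      rw [show i + (j + 1) = (i + j) + 1 from rfl]
      simp only [pow_succ', Module.End.mul_apply]
      rw [succ_nsmul, ε.add_right, ε.add_right, hshift i a, h1]
      module
  exact fun i j a b x hx y hy => Hmain j i a b x hx y hy
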